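/- Consistency of the exchangeable permutation probability function: if p^(n)_k(n_1,...,n_k) = φ^(n)_k(n_1,...,n_k)/∏_j (n_j−1)! for an EPPF (φ^(m)), then for every π ∈ S_n with cycle lengths c(π), one has p^(n)_{k(π)}(c(π)) = ∑_{σ ∈ A(π)} p^(n+1)_{k(σ)}(c(σ)), where A(π) is the set of permutations of [n+1] whose deletion of n+1 equals π. -/

import Mathlib

open Equiv Function

/-- Deletion of the element `n+1` (here `Fin.last n`) from the cycle representation:
`d(σ)(i) = σ(i)` if `i ≠ σ⁻¹(n+1)`, and `d(σ)(i) = σ(n+1)` if `i = σ⁻¹(n+1)`. -/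
def delFun {n : ℕ} (σ : Perm (Fin (n + 1))) (i : Fin n) : Fin n :=
  if h : σ i.castSucc = Fin.last n then
    (σ (Fin.last n)).castPred
      (fun hl => (Fin.castSucc_lt_last i).ne (σ.injective (h.trans hl.symm)))
  else
    (σ i.castSucc).castPred h

theorem delFun_injective {n : ℕ} (σ : Perm (Fin (n + 1))) : Injective (delFun σ) := by
  intro i j hij
  have hcast := congrArg Fin.castSucc hij
  unfold delFun at hcast
  split_ifs at hcast with h1 h2 h2 <;>
    simp only [Fin.castSucc_castPred] at hcast
  · exact Fin.castSucc_injective n (σ.injective (h1.trans h2.symm))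
  · exact absurd (σ.injective hcast) (Fin.castSucc_lt_last j).ne'
  · exact absurd (σ.injective hcast) (Fin.castSucc_lt_last i).ne
  · exact Fin.castSucc_injective n (σ.injective hcast)

/-- The deletion map `d : S_{n+1} → S_n`. -/
noncomputable def del {n : ℕ} (σ : Perm (Fin (n + 1))) : Perm (Fin n) :=
  Equiv.ofBijective (delFun σ) (Finite.injective_iff_bijective.mp (delFun_injective σ))

/-- An exchangeable partition probability function, as a symmetric function of the
block sizes, encoded on multisets of (positive) block sizes. -/
structure EPPF where
  φ : Multiset ℕ → ℝ
  nonneg : ∀ m, 0 ≤ φ m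
  base : φ {1} = 1
  consistency : ∀ m : Multiset ℕ, (∀ a ∈ m, 0 < a) →
    φ m = ((m.map fun a => φ ((m.erase a).cons (a + 1))).sum) + φ (m.cons 1)

/-- The multiset of all cycle (orbit) lengths of a permutation, including fixed points. -/
def fullCycleType {n : ℕ} (π : Perm (Fin n)) : Multiset ℕ :=
  π.cycleType + Multiset.replicate (Fintype.card {x : Fin n // π x = x}) 1

/-- `p(π) = φ(c(π)) / ∏_j (n_j - 1)!` -/
noncomputable def permProb {n : ℕ} (E : EPPF) (π : Perm (Fin n)) : ℝ :=
  E.φ (fullCycleType π) / ((fullCycleType π).map fun a => ((a - 1).factorial : ℝ)).prod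

/-!
The fibre `A(π)` of the deletion map is parametrised by `j ∈ Fin (n + 1)`: `insertAfter π j`
sends `j ↦ n + 1 ↦ π j`, i.e. it inserts `n + 1` into the cycle of `j` right after `j`, or
makes it a new fixed point when `j = n + 1`. Inserting after a point of a cycle of length `ℓ`
turns that cycle into one of length `ℓ + 1`, and a cycle of length `ℓ` offers `ℓ` such points, so
`∑_{σ ∈ A(π)} p(σ) = ∑_{a ∈ c(π)} a · p(c(π) - {a} + {a + 1}) + p(c(π) + {1})`.
Since `a! = a · (a - 1)!`, the right-hand side is the EPPF recursion for `φ(c(π))` divided by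
`∏ (a - 1)!`, which is `p(π)`.
-/

open Finset

namespace Equiv.Perm

variable {α : Type*} [Fintype α] [DecidableEq α]

theorem support_swap_mul_eq_insert {c : Perm α} {x b : α} (hx : x ∉ c.support)
    (hb : b ∈ c.support) : (swap b x * c).support = insert x c.support := by
  have hcb : c b ≠ x := fun h => hx (h ▸ apply_mem_support.mpr hb)
  have hσx : (swap b x * c) x = b := by simp [notMem_support.mp hx]
  have hσσx : (swap b x * c) ((swap b x * c) x) ≠ x := by
    rw [hσx, mul_apply, swap_apply_of_ne_of_ne (mem_support.mp hb) hcb]; exact hcb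
  have hremove := support_swap_mul_eq (swap b x * c) x hσσx
  rw [hσx, ← mul_assoc, swap_comm, swap_mul_self, one_mul] at hremove
  rw [hremove, insert_sdiff_self_of_mem]
  rw [mem_support, hσx]
  exact ne_of_mem_of_not_mem hb hx

theorem IsCycle.swap_mul_of_notMem {c : Perm α} (hc : c.IsCycle) {x b : α} (hx : x ∉ c.support)
    (hb : b ∈ c.support) : (swap b x * c).IsCycle := by
  set σ := swap b x * c
  have hσx : σ x = b := by simp [σ, notMem_support.mp hx]
  have hc_ne_x : ∀ y ∈ c.support, c y ≠ x := fun y hy h => hx (h ▸ apply_mem_support.mpr hy)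
  have step : ∀ y ∈ c.support, SameCycle σ y (c y) := by
    intro y hy
    by_cases hyb : c y = b
    · have hσy : σ y = x := by simp [σ, hyb]
      exact ⟨2, by rw [zpow_two, mul_apply, hσy, hσx, hyb]⟩
    · exact ⟨1, by simp [σ, swap_apply_of_ne_of_ne hyb (hc_ne_x y hy)]⟩
  have reach : ∀ k : ℕ, SameCycle σ b ((c ^ k) b) := by
    intro k
    induction k with
    | zero => rfl
    | succ k ih =>
      rw [pow_succ', mul_apply]
      exact ih.trans (step _ (pow_apply_mem_support.mpr hb))
  have hσb : σ b ≠ b := by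
    rw [show σ b = c b from swap_apply_of_ne_of_ne (mem_support.mp hb) (hc_ne_x b hb)]
    exact mem_support.mp hb
  refine ⟨b, hσb, fun y hy => ?_⟩
  rw [← mem_support, support_swap_mul_eq_insert hx hb, mem_insert] at hy
  rcases hy with rfl | hy
  · exact ⟨-1, by rw [zpow_neg_one, inv_eq_iff_eq, hσx]⟩
  · obtain ⟨k, -, rfl⟩ := (hc.sameCycle (mem_support.mp hb) (mem_support.mp hy)).exists_pow_eq'
    exact reach k

-- `f.cycleOf y = 1` when `f y = y`, so its support alone would give length `0`.
def cycleLength (f : Perm α) (y : α) : ℕ :=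
  if f y = y then 1 else #(f.cycleOf y).support

theorem cycleLength_of_apply_eq {f : Perm α} {y : α} (hy : f y = y) : f.cycleLength y = 1 :=
  if_pos hy

theorem cycleLength_of_apply_ne {f : Perm α} {y : α} (hy : f y ≠ y) :
    f.cycleLength y = #(f.cycleOf y).support :=
  if_neg hy

theorem erase_one_parts_partition {f : Perm α} {x : α} (hx : f x = x) :
    f.partition.parts.erase 1 =
      f.cycleType + Multiset.replicate (Fintype.card α - #f.support - 1) 1 := by
  have hlt : #f.support < Fintype.card α :=
    card_lt_univ_of_notMem (notMem_support.mpr hx)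
  rw [parts_partition,
    Multiset.erase_add_right_pos _ (Multiset.mem_replicate.mpr ⟨by omega, rfl⟩),
    show Fintype.card α - #f.support = Fintype.card α - #f.support - 1 + 1 by omega,
    Multiset.replicate_succ, Multiset.erase_cons_head, Nat.add_sub_cancel]

theorem parts_partition_swap_mul_of_apply_ne {f : Perm α} {x y : α} (hx : f x = x)
    (hy : f y ≠ y) :
    (swap (f y) x * f).partition.parts = (#(f.cycleOf y).support + 1) ::ₘ
      (f.partition.parts.erase 1).erase #(f.cycleOf y).support := by
  set c := f.cycleOf y
  set g := f * c⁻¹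
  have hgc : g * c = f := inv_mul_cancel_right f c
  have hdisj : Disjoint g c :=
    disjoint_mul_inv_of_mem_cycleFactorsFinset (cycleOf_mem_cycleFactorsFinset_iff.mpr
      (mem_support.mpr hy))
  have hfy : f y ∈ c.support := by
    rw [← cycleOf_apply_self f y, apply_mem_support, mem_support, cycleOf_apply_self]; exact hy
  have hxc : x ∉ c.support := fun h => mem_support.mp (support_cycleOf_le f y h) hx
  have hgx : g x = x := by
    rw [mul_apply, inv_eq_iff_eq.mpr (notMem_support.mp hxc).symm, hx]
  have hxg : x ∉ g.support := notMem_support.mpr hgx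
  have hgfy : g (f y) = f y := (hdisj (f y)).resolve_right (mem_support.mp hfy)
  have hcomm : swap (f y) x * g = g * swap (f y) x := by
    have hconj := swap_apply_apply g (f y) x
    rw [hgfy, hgx] at hconj
    exact eq_mul_inv_iff_mul_eq.mp hconj
  have hsupp := support_swap_mul_eq_insert hxc hfy
  have hdisj' : Disjoint g (swap (f y) x * c) := by
    rw [disjoint_iff_disjoint_support, hsupp, disjoint_insert_right]
    exact ⟨hxg, disjoint_iff_disjoint_support.mp hdisj⟩
  have hcyc := (isCycle_cycleOf f hy).swap_mul_of_notMem hxc hfy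
  have hdecomp : swap (f y) x * f = g * (swap (f y) x * c) := by
    rw [← mul_assoc, ← hcomm, mul_assoc, hgc]
  rw [erase_one_parts_partition hx, parts_partition, hdecomp, hdisj'.cycleType_mul,
    hcyc.cycleType, hdisj'.card_support_mul, hsupp, card_insert_of_notMem hxc,
    ← hgc, hdisj.cycleType_mul, hdisj.card_support_mul, (isCycle_cycleOf f hy).cycleType]
  simp only [add_comm _ ({_} : Multiset ℕ), Multiset.singleton_add, Multiset.cons_add]
  rw [Multiset.erase_cons_head]
  congr 3

-- `swap (f y) x * f` inserts the fixed point `x` into the cycle of `y`, right after `y`.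
theorem parts_partition_swap_mul {f : Perm α} {x y : α} (hx : f x = x) (hyx : y ≠ x) :
    (swap (f y) x * f).partition.parts = (f.cycleLength y + 1) ::ₘ
      (f.partition.parts.erase 1).erase (f.cycleLength y) := by
  by_cases hy : f y = y
  swap
  · rw [cycleLength_of_apply_ne hy]
    exact parts_partition_swap_mul_of_apply_ne hx hy
  have hdisj : Disjoint (swap y x) f := by
    rw [disjoint_iff_disjoint_support, support_swap hyx, disjoint_insert_left,
      disjoint_singleton_left]
    exact ⟨notMem_support.mpr hy, notMem_support.mpr hx⟩
  have hcard := card_le_univ (swap y x * f).support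
  rw [hdisj.card_support_mul, card_support_swap hyx] at hcard
  rw [cycleLength_of_apply_eq hy, hy, erase_one_parts_partition hx, parts_partition,
    hdisj.cycleType_mul, hdisj.card_support_mul, card_support_swap hyx,
    (isCycle_swap hyx).cycleType, card_support_swap hyx,
    Multiset.erase_add_right_pos _ (Multiset.mem_replicate.mpr ⟨by omega, rfl⟩),
    show Fintype.card α - #f.support - 1 = Fintype.card α - (2 + #f.support) + 1 by omega,
    Multiset.replicate_succ, Multiset.erase_cons_head, Multiset.singleton_add,
    Multiset.cons_add]

theorem sum_support_cycleLength {M : Type*} [AddCommMonoid M] (f : Perm α) (h : ℕ → M) :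
    ∑ y ∈ f.support, h (f.cycleLength y) = (f.cycleType.map fun a => a • h a).sum := by
  have hfiber :
      ∀ c ∈ f.cycleFactorsFinset, {y ∈ f.support | f.cycleOf y = c} = c.support := by
    intro c hc
    ext y
    rw [mem_filter]
    constructor
    · rintro ⟨hy, rfl⟩
      exact mem_support_cycleOf_iff.mpr ⟨SameCycle.refl f y, hy⟩
    · intro hy
      exact ⟨mem_cycleFactorsFinset_support_le hc hy, (cycle_is_cycleOf hy hc).symm⟩
  have hlength :
      ∀ c ∈ f.cycleFactorsFinset, ∀ y ∈ c.support, f.cycleLength y = #c.support :=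
    fun c hc y hy => by
      rw [cycleLength_of_apply_ne (mem_support.mp (mem_cycleFactorsFinset_support_le hc hy)),
        ← cycle_is_cycleOf hy hc]
  rw [← sum_fiberwise_of_maps_to fun y hy => cycleOf_mem_cycleFactorsFinset_iff.mpr hy,
    cycleType_def, Multiset.map_map]
  refine (sum_congr rfl fun c hc => ?_).trans (sum_eq_multiset_sum _ _)
  rw [hfiber c hc, sum_congr rfl fun y hy => congrArg h (hlength c hc y hy), sum_const]
  rfl

theorem sum_cycleLength {M : Type*} [AddCommMonoid M] (f : Perm α) (h : ℕ → M) :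
    ∑ y, h (f.cycleLength y) = (f.partition.parts.map fun a => a • h a).sum := by
  rw [← sum_add_sum_compl f.support, sum_support_cycleLength, parts_partition, Multiset.map_add,
    Multiset.sum_add, sum_congr rfl fun y hy =>
      congrArg h (cycleLength_of_apply_eq (notMem_support.mp (mem_compl.mp hy))),
    sum_const, card_compl, Multiset.map_replicate, Multiset.sum_replicate, one_smul]

theorem cycleOf_extendDomain {β : Type*} [Fintype β] [DecidableEq β] {p : β → Prop}
    [DecidablePred p] (e : α ≃ Subtype p) (g : Perm α) (a : α) :
    (g.extendDomain e).cycleOf (e a) = (g.cycleOf a).extendDomain e := by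
  ext b
  by_cases hb : p b
  · obtain ⟨a', rfl⟩ : ∃ a', (e a' : β) = b := ⟨e.symm ⟨b, hb⟩, by simp⟩
    simp only [cycleOf_apply, extendDomain_apply_image, sameCycle_extendDomain]
    split_ifs <;> rfl
  · rw [cycleOf_apply, extendDomain_apply_not_subtype _ _ hb,
      extendDomain_apply_not_subtype _ _ hb, ite_self]

theorem cycleLength_extendDomain {β : Type*} [Fintype β] [DecidableEq β] {p : β → Prop}
    [DecidablePred p] (e : α ≃ Subtype p) (g : Perm α) (a : α) :
    (g.extendDomain e).cycleLength (e a) = g.cycleLength a := by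
  simp only [cycleLength, extendDomain_apply_image, Subtype.coe_inj, e.apply_eq_iff_eq,
    cycleOf_extendDomain, card_support_extend_domain]

end Equiv.Perm

section Insertion

open Equiv.Perm

variable {n : ℕ}

def extendLast (π : Perm (Fin n)) : Perm (Fin (n + 1)) :=
  π.extendDomain (finSuccAboveEquiv (Fin.last n))

@[simp]
theorem extendLast_castSucc (π : Perm (Fin n)) (i : Fin n) :
    extendLast π i.castSucc = (π i).castSucc := by
  simpa [extendLast, finSuccAboveEquiv_apply] using
    extendDomain_apply_image π (finSuccAboveEquiv (Fin.last n)) i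

@[simp]
theorem extendLast_last (π : Perm (Fin n)) : extendLast π (Fin.last n) = Fin.last n :=
  extendDomain_apply_not_subtype _ _ (by simp)

theorem extendLast_injective : Injective (extendLast (n := n)) :=
  extendDomainHom_injective _

theorem extendLast_del (σ : Perm (Fin (n + 1))) :
    extendLast (del σ) = swap (σ (Fin.last n)) (Fin.last n) * σ := by
  refine Equiv.ext fun x => ?_
  cases x using Fin.lastCases with
  | last => simp
  | cast i =>
    rw [extendLast_castSucc, mul_apply]
    show Fin.castSucc (delFun σ i) = _
    unfold delFun
    split_ifs with h
    · rw [Fin.castSucc_castPred, h, swap_apply_right]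
    · rw [Fin.castSucc_castPred, swap_apply_of_ne_of_ne _ h]
      exact σ.injective.ne (Fin.castSucc_lt_last i).ne

def insertAfter (π : Perm (Fin n)) (j : Fin (n + 1)) : Perm (Fin (n + 1)) :=
  swap (extendLast π j) (Fin.last n) * extendLast π

theorem insertAfter_apply_self (π : Perm (Fin n)) (j : Fin (n + 1)) :
    insertAfter π j j = Fin.last n := by
  simp [insertAfter]

theorem insertAfter_last (π : Perm (Fin n)) : insertAfter π (Fin.last n) = extendLast π := by
  rw [insertAfter, extendLast_last, swap_self]
  exact one_mul _

theorem del_insertAfter (π : Perm (Fin n)) (j : Fin (n + 1)) : del (insertAfter π j) = π := by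
  apply extendLast_injective
  rw [extendLast_del, insertAfter, mul_apply, extendLast_last, swap_apply_right,
    swap_mul_self_mul]

theorem insertAfter_del (σ : Perm (Fin (n + 1))) :
    insertAfter (del σ) (σ⁻¹ (Fin.last n)) = σ := by
  rw [insertAfter, extendLast_del, mul_apply, Perm.inv_def, apply_symm_apply, swap_apply_right,
    swap_mul_self_mul]

def delFiberEquiv (π : Perm (Fin n)) :
    Fin (n + 1) ≃ {σ : Perm (Fin (n + 1)) // del σ = π} where
  toFun j := ⟨insertAfter π j, del_insertAfter π j⟩
  invFun σ := σ.1⁻¹ (Fin.last n)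
  left_inv j := (insertAfter π j).symm_apply_eq.mpr (insertAfter_apply_self π j).symm
  right_inv := by
    rintro ⟨σ, rfl⟩
    exact Subtype.ext (insertAfter_del σ)

theorem fullCycleType_eq_parts_partition (σ : Perm (Fin n)) :
    fullCycleType σ = σ.partition.parts := by
  rw [fullCycleType, parts_partition, Fintype.card_subtype]
  congr
  rw [show ({x | σ x = x} : Finset (Fin n)) = σ.supportᶜ by ext; simp, card_compl]

theorem parts_partition_extendLast (π : Perm (Fin n)) :
    (extendLast π).partition.parts = 1 ::ₘ π.partition.parts := by
  have hle : #π.support ≤ n := by simpa using card_le_univ π.support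
  rw [parts_partition, parts_partition, extendLast, cycleType_extendDomain,
    card_support_extend_domain, Fintype.card_fin, Fintype.card_fin,
    show n + 1 - #π.support = n - #π.support + 1 by omega, Multiset.replicate_succ,
    Multiset.add_cons]

theorem cycleLength_extendLast (π : Perm (Fin n)) (i : Fin n) :
    (extendLast π).cycleLength i.castSucc = π.cycleLength i := by
  simpa [extendLast, finSuccAboveEquiv_apply] using
    cycleLength_extendDomain (finSuccAboveEquiv (Fin.last n)) π i

theorem fullCycleType_insertAfter_last (π : Perm (Fin n)) :
    fullCycleType (insertAfter π (Fin.last n)) = (fullCycleType π).cons 1 := by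
  rw [insertAfter_last, fullCycleType_eq_parts_partition, fullCycleType_eq_parts_partition,
    parts_partition_extendLast]

theorem fullCycleType_insertAfter_castSucc (π : Perm (Fin n)) (i : Fin n) :
    fullCycleType (insertAfter π i.castSucc) =
      ((fullCycleType π).erase (π.cycleLength i)).cons (π.cycleLength i + 1) := by
  rw [fullCycleType_eq_parts_partition, fullCycleType_eq_parts_partition, insertAfter,
    parts_partition_swap_mul (extendLast_last π) (Fin.castSucc_lt_last i).ne,
    parts_partition_extendLast, Multiset.erase_cons_head, cycleLength_extendLast]

end Insertion

namespace EPPF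

noncomputable def weight (E : EPPF) (m : Multiset ℕ) : ℝ :=
  E.φ m / (m.map fun a => ((a - 1).factorial : ℝ)).prod

theorem mul_weight_cons_succ_erase (E : EPPF) {m : Multiset ℕ} {a : ℕ} (ha : a ∈ m)
    (ha0 : a ≠ 0) :
    a * E.weight ((m.erase a).cons (a + 1)) =
      E.φ ((m.erase a).cons (a + 1)) / (m.map fun a => ((a - 1).factorial : ℝ)).prod := by
  have hprod : ((m.erase a).map fun a => ((a - 1).factorial : ℝ)).prod ≠ 0 :=
    Multiset.prod_ne_zero (by simp [Nat.factorial_ne_zero])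
  rw [weight, Multiset.map_cons, Multiset.prod_cons, Nat.add_sub_cancel,
    ← Multiset.prod_map_erase ha, ← Nat.mul_factorial_pred ha0]
  push_cast
  field_simp

theorem weight_cons_one (E : EPPF) (m : Multiset ℕ) :
    E.weight (m.cons 1) = E.φ (m.cons 1) / (m.map fun a => ((a - 1).factorial : ℝ)).prod := by
  simp [weight]

theorem weight_consistency (E : EPPF) {m : Multiset ℕ} (hm : ∀ a ∈ m, 0 < a) :
    E.weight m = (m.map fun a : ℕ => (a : ℝ) * E.weight ((m.erase a).cons (a + 1))).sum +
      E.weight (m.cons 1) := by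
  rw [Multiset.map_congr rfl fun a ha => E.mul_weight_cons_succ_erase ha (hm a ha).ne',
    Multiset.sum_map_div, weight_cons_one, ← add_div, ← E.consistency m hm, weight]

end EPPF

theorem permProb_eq_weight (E : EPPF) {n : ℕ} (π : Perm (Fin n)) :
    permProb E π = E.weight (fullCycleType π) :=
  rfl

theorem permProb_consistency_general (n : ℕ) (E : EPPF) (π : Perm (Fin n)) :
    permProb E π = ∑ σ : {σ : Perm (Fin (n + 1)) // del σ = π}, permProb E σ.1 := by
  have hpos : ∀ a ∈ fullCycleType π, 0 < a := by
    rw [fullCycleType_eq_parts_partition]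
    exact fun a => π.partition.parts_pos
  rw [← (delFiberEquiv π).sum_comp, Fin.sum_univ_castSucc]
  simp only [delFiberEquiv, Equiv.coe_fn_mk, permProb_eq_weight,
    fullCycleType_insertAfter_castSucc, fullCycleType_insertAfter_last]
  rw [E.weight_consistency hpos,
    π.sum_cycleLength fun a => E.weight (((fullCycleType π).erase a).cons (a + 1))]
  simp only [fullCycleType_eq_parts_partition, nsmul_eq_mul]

/-- Consistency of the exchangeable permutation probability function:
`p^(n)(π) = ∑_{σ ∈ A(π)} p^(n+1)(σ)`. -/
theorem permProb_consistency (n : ℕ) (hn : 1 ≤ n) (E : EPPF) (π : Perm (Fin n)) :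
    permProb E π = ∑ σ : {σ : Perm (Fin (n + 1)) // del σ = π}, permProb E σ.1 :=
  permProb_consistency_general n E π
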